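/- arXiv:1303.0523 — 2 statements merged into one kernel-verified Lean document; each statement's English description precedes it below -/
import Mathlib

section
/- For every integer t₀ ≥ 1 and every real ε > 0, there exists a finite connected graph G with 2t₀ ≤ |V(G)| such that player B has a single strategy in the t₀-round discrete Voronoi game on G with the following property: for every k = 1, …, t₀, after both players have placed their k-th pebbles, if the unclaimed vertices were divided according to the Voronoi rule at that moment, B's score would be at least (1 − ε)·|V(G)|. -/
/-!
Take `K` centres and `K` hubs indexed by `ZMod K`, hang `10 K ^ 4` leaves on every hub, and join
centre `t` to hub `g` by a path of length `5 K + 5 ((g - t) mod K)`. Whatever vertex `x` player A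
claims, with `t` the centre it hangs from, B claims a free centre `t + d` with `1 ≤ d ≤ 2 t₀`:
it is `5 d` closer than centre `t` to every hub `g` with `(g - t) mod K ≥ 2 t₀`, and a lower
bound for the distance from `x` to such a hub (apart from the hub of `x` itself) shows that `x` is
no closer than centre `t`. So after `k ≤ t₀` rounds B is strictly closer than A to all hubs but
`k (2 t₀ + 1)` and to their leaves, which make up almost all of the graph once `K` is large.
-/

open SimpleGraph

variable {V : Type*}

/-- Distance from a vertex to a finite set of vertices (`⊤` if the set is empty). -/
noncomputable def distToSet (G : SimpleGraph V) (S : Finset V) (v : V) : ℕ∞ :=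
  S.inf fun a => (G.dist a v : ℕ∞)

/-- Player A's Voronoi score. -/
noncomputable def scoreA [Fintype V] (G : SimpleGraph V) (A B : Finset V) : ℝ :=
  ∑ v : V,
    if distToSet G A v < distToSet G B v then 1
    else if distToSet G A v = distToSet G B v then 1/2 else 0

/-- Player B's Voronoi score. -/
noncomputable def scoreB [Fintype V] (G : SimpleGraph V) (A B : Finset V) : ℝ :=
  ∑ v : V,
    if distToSet G B v < distToSet G A v then 1
    else if distToSet G B v = distToSet G A v then 1/2 else 0

/-- Minimax value (A's score under optimal play) of the Voronoi game with `t`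
remaining rounds, given the sets of vertices already claimed by A and B. -/
noncomputable def gameValue [Fintype V] [DecidableEq V] (G : SimpleGraph V) :
    ℕ → Finset V → Finset V → ℝ
  | 0, A, B => scoreA G A B
  | (t+1), A, B =>
      sSup {r : ℝ | ∃ a, a ∉ A ∧ a ∉ B ∧
        r = sInf {s : ℝ | ∃ b, b ∉ insert a A ∧ b ∉ B ∧
          s = gameValue G t (insert a A) (insert b B)}}

/-- The Voronoi ratio of `G` for a `t`-round game. -/
noncomputable def VR [Fintype V] [DecidableEq V] (G : SimpleGraph V) (t : ℕ) : ℝ :=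
  gameValue G t ∅ ∅ / (Fintype.card V)

/-- The history of the game after A's `(k+1)`-st move, when A plays the sequence `a`
and B plays according to the strategy `σ` (which maps a history, a list of all moves
made so far with A moving first, to B's next move). -/
def histList (σ : List V → V) (a : ℕ → V) : ℕ → List V
  | 0 => [a 0]
  | (k + 1) => histList σ a k ++ [σ (histList σ a k), a (k + 1)]

/-- B's `(k+1)`-st move when following strategy `σ` against A's sequence of moves `a`. -/
def bMove (σ : List V → V) (a : ℕ → V) (k : ℕ) : V :=
  σ (histList σ a k)


namespace SimpleGraph

variable {W : Type*} {G : SimpleGraph V} {G' : SimpleGraph W}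

lemma Reachable.dist_map_le (f : G →g G') {u v : V} (h : G.Reachable u v) :
    G'.dist (f u) (f v) ≤ G.dist u v := by
  obtain ⟨p, hp⟩ := h.exists_walk_length_eq_dist
  simpa [hp] using dist_le (p.map f)

lemma Iso.dist_apply (φ : G ≃g G') (u v : V) : G'.dist (φ u) (φ v) = G.dist u v := by
  by_cases h : G.Reachable u v
  · refine le_antisymm (h.dist_map_le φ.toHom) ?_
    simpa using (Iso.reachable_iff (φ := φ) |>.mpr h).dist_map_le φ.symm.toHom
  · rw [dist_eq_zero_of_not_reachable h,
      dist_eq_zero_of_not_reachable (mt (Iso.reachable_iff (φ := φ)).mp h)]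

lemma Walk.le_add_length {f : V → ℕ} (hf : ∀ ⦃x y⦄, G.Adj x y → f x ≤ f y + 1) {u v : V}
    (p : G.Walk u v) : f u ≤ f v + p.length := by
  induction p with
  | nil => simp
  | cons h _ ih => rw [Walk.length_cons]; have := hf h; omega

lemma Reachable.le_add_dist {f : V → ℕ} (hf : ∀ ⦃x y⦄, G.Adj x y → f x ≤ f y + 1) {u v : V}
    (h : G.Reachable u v) : f u ≤ f v + G.dist u v := by
  obtain ⟨p, hp⟩ := h.exists_walk_length_eq_dist
  exact hp ▸ p.le_add_length hf

lemma Reachable.dist_add_one_le_of_pendant {u v w : V} (h : G.Reachable u v) (huv : u ≠ v)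
    (hv : ∀ x, G.Adj x v → x = w) : G.dist u w + 1 ≤ G.dist u v := by
  obtain ⟨p, hp⟩ := h.symm.exists_walk_length_eq_dist
  cases p with
  | nil => exact absurd rfl huv
  | cons hadj q =>
    obtain rfl := hv _ hadj.symm
    rw [dist_comm, dist_comm (u := u), ← hp, Walk.length_cons]
    exact Nat.add_le_add_right (dist_le q) 1

end SimpleGraph

section Voronoi

variable {G : SimpleGraph V}

lemma distToSet_lt_distToSet {A B : Finset V} {v : V} (hA : A.Nonempty)
    (h : ∀ x ∈ A, ∃ y ∈ B, G.dist y v < G.dist x v) : distToSet G B v < distToSet G A v := by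
  obtain ⟨x, hx, hmin⟩ := A.exists_mem_eq_inf hA fun a => (G.dist a v : ℕ∞)
  obtain ⟨y, hy, hyx⟩ := h x hx
  rw [distToSet, distToSet, hmin]
  exact (Finset.inf_le hy).trans_lt (by exact_mod_cast hyx)

lemma card_le_scoreB [Fintype V] {A B T : Finset V}
    (h : ∀ v ∈ T, distToSet G B v < distToSet G A v) : (T.card : ℝ) ≤ scoreB G A B := by
  rw [scoreB, Finset.card_eq_sum_ones, Nat.cast_sum]
  refine (Finset.sum_le_sum fun v hv => ?_).trans
    (Finset.sum_le_sum_of_subset_of_nonneg T.subset_univ fun v _ _ => ?_)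
  · simp [h v hv]
  · split_ifs <;> norm_num

lemma card_le_scoreB_of_forall_lt [Fintype V] [DecidableEq V] (a b : ℕ → V) {k : ℕ} (hk : 0 < k)
    {T : Finset V} (h : ∀ v ∈ T, ∀ j < k, G.dist (b j) v < G.dist (a j) v) :
    (T.card : ℝ) ≤ scoreB G ((Finset.range k).image a) ((Finset.range k).image b) := by
  refine card_le_scoreB fun v hv => distToSet_lt_distToSet
    ⟨a 0, Finset.mem_image_of_mem _ (Finset.mem_range.mpr hk)⟩ ?_
  simp only [Finset.forall_mem_image, Finset.mem_range]
  exact fun j hj => ⟨b j, Finset.mem_image_of_mem _ (Finset.mem_range.mpr hj), h v hv j hj⟩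

variable {W : Type*} [DecidableEq W] {G' : SimpleGraph W}

lemma distToSet_image_apply (φ : G ≃g G') (A : Finset V) (v : V) :
    distToSet G' (A.image φ) (φ v) = distToSet G A v := by
  simp only [distToSet, Finset.inf_image, Function.comp_def, φ.dist_apply]

lemma scoreB_image [Fintype V] [Fintype W] (φ : G ≃g G') (A B : Finset V) :
    scoreB G' (A.image φ) (B.image φ) = scoreB G A B := by
  simp only [scoreB, ← φ.toEquiv.sum_comp, RelIso.coe_fn_toEquiv, distToSet_image_apply]

end Voronoi

section History

variable {W : Type*} (σ : List V → V) (a : ℕ → V)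

lemma histList_getLastD (k : ℕ) (d : V) : (histList σ a k).getLastD d = a k := by
  cases k <;> simp [histList]

lemma histList_length (k : ℕ) : (histList σ a k).length = 2 * k + 1 := by
  induction k with
  | zero => rfl
  | succ k ih => simp [histList, ih]; omega

lemma histList_toFinset [DecidableEq V] (k : ℕ) :
    (histList σ a k).toFinset =
      insert (a k) ((Finset.range k).image a ∪ (Finset.range k).image (bMove σ a)) := by
  induction k with
  | zero => simp [histList]
  | succ k ih =>
    ext v
    simp only [histList, List.toFinset_append, ih, Finset.range_add_one, Finset.image_insert]
    simp only [bMove, List.toFinset_cons, List.toFinset_nil, Finset.mem_union, Finset.mem_insert,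
      Finset.notMem_empty]
    tauto

lemma histList_map {f : V → W} {g : W → V} (hgf : Function.LeftInverse g f) (k : ℕ) :
    histList (fun L => f (σ (L.map g))) (f ∘ a) k = (histList σ a k).map f := by
  induction k with
  | zero => simp [histList]
  | succ k ih => simp [histList, ih, List.map_map, hgf.comp_eq_id]

lemma bMove_map {f : V → W} {g : W → V} (hgf : Function.LeftInverse g f) (k : ℕ) :
    bMove (fun L => f (σ (L.map g))) (f ∘ a) k = f (bMove σ a k) := by
  simp [bMove, histList_map σ a hgf, List.map_map, hgf.comp_eq_id]

end History

def IsDominatingStrategy [Fintype V] [DecidableEq V] (G : SimpleGraph V) (t₀ : ℕ) (ε : ℝ)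
    (σ : List V → V) : Prop :=
  ∀ a : ℕ → V,
    (∀ k < t₀, a k ∉ (Finset.range k).image a ∪ (Finset.range k).image (bMove σ a)) →
      (∀ k < t₀, bMove σ a k ∉
          insert (a k) ((Finset.range k).image a ∪ (Finset.range k).image (bMove σ a))) ∧
      (∀ k, 1 ≤ k → k ≤ t₀ →
        (1 - ε) * Fintype.card V ≤
          scoreB G ((Finset.range k).image a) ((Finset.range k).image (bMove σ a)))

lemma IsDominatingStrategy.map {W : Type*} [Fintype V] [DecidableEq V] [Fintype W]
    [DecidableEq W] {G : SimpleGraph V} {G' : SimpleGraph W} {t₀ : ℕ} {ε : ℝ} {σ : List V → V}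
    (hσ : IsDominatingStrategy G t₀ ε σ) (φ : G ≃g G') :
    IsDominatingStrategy G' t₀ ε (fun L => φ (σ (L.map φ.symm))) := by
  intro a
  obtain ⟨a, rfl⟩ : ∃ a₀, a = φ ∘ a₀ := ⟨φ.symm ∘ a, by ext; simp⟩
  have hb : bMove (fun L => φ (σ (L.map φ.symm))) (φ ∘ a) = φ ∘ bMove σ a :=
    funext (bMove_map σ a φ.symm_apply_apply)
  rw [hb, ← Fintype.card_congr φ.toEquiv]
  simp only [← Finset.image_image, ← Finset.image_union, ← Finset.image_insert,
    Function.comp_apply, φ.injective.mem_finset_image, scoreB_image]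
  exact hσ a

namespace HubGraph

variable (K : ℕ)

/-- Centres `t`, spoke vertices `(t, g, s)` (vertex `s` of a path of length `10 K` hanging from
centre `t`, joined to hub `g` at position `attach t g`), and clusters `(g, o)`: hub `g` for
`o = none`, one of its `10 K ^ 4` leaves otherwise. -/
abbrev Vert : Type :=
  ZMod K ⊕ (ZMod K × ZMod K × Fin (10 * K)) ⊕ (ZMod K × Option (Fin (10 * K ^ 4)))

def center (t : ZMod K) : Vert K := Sum.inl t

def spoke (t g : ZMod K) (s : Fin (10 * K)) : Vert K := Sum.inr (Sum.inl (t, g, s))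

def cluster (g : ZMod K) (o : Option (Fin (10 * K ^ 4))) : Vert K := Sum.inr (Sum.inr (g, o))

def hubDist (t g : ZMod K) : ℕ := 5 * K + 5 * (g - t).val

def attach (t g : ZMod K) : ℕ := hubDist K t g - 2

inductive Edge : Vert K → Vert K → Prop
  | center_spoke (t g : ZMod K) (h : 0 < 10 * K) : Edge (center K t) (spoke K t g ⟨0, h⟩)
  | spoke_succ (t g : ZMod K) (s : ℕ) (h : s + 1 < 10 * K) :
      Edge (spoke K t g ⟨s, Nat.lt_of_succ_lt h⟩) (spoke K t g ⟨s + 1, h⟩)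
  | spoke_hub (t g : ZMod K) (h : attach K t g < 10 * K) :
      Edge (spoke K t g ⟨attach K t g, h⟩) (cluster K g none)
  | hub_leaf (g : ZMod K) (z : Fin (10 * K ^ 4)) : Edge (cluster K g none) (cluster K g (some z))

def graph : SimpleGraph (Vert K) := SimpleGraph.fromRel (Edge K)

/-- The centre a vertex hangs from; for the cluster of hub `g` it is centre `g`, the centre
closest to that hub. -/
def base : Vert K → ZMod K
  | Sum.inl t => t
  | Sum.inr (Sum.inl (t, _, _)) => t
  | Sum.inr (Sum.inr (g, _)) => g

def hubOf : Vert K → Option (ZMod K)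
  | Sum.inl _ => none
  | Sum.inr (Sum.inl (_, g, _)) => some g
  | Sum.inr (Sum.inr (g, _)) => some g

/-- A lower bound for the distance to hub `g`: a spoke is left either through its centre or
through its own hub, and hubs `h ≠ g` are at distance at least `10 K` from hub `g`. -/
def potential (g : ZMod K) : Vert K → ℕ
  | Sum.inl t => hubDist K t g
  | Sum.inr (Sum.inl (t, h, s)) =>
      min (s.val + 1 + hubDist K t g)
        ((s.val - attach K t h) + (attach K t h - s.val) + 1 + if h = g then 0 else 10 * K)
  | Sum.inr (Sum.inr (h, o)) => (if h = g then 0 else 10 * K) + if o = none then 0 else 1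

variable {K}

lemma eq_hub_of_adj_leaf {g : ZMod K} {z : Fin (10 * K ^ 4)} {u : Vert K}
    (h : (graph K).Adj u (cluster K g (some z))) : u = cluster K g none := by
  rcases ((SimpleGraph.fromRel_adj _ _ _).mp h).2 with h | h <;> cases h
  rfl

section

variable [NeZero K]

lemma hubDist_bounds (t g : ZMod K) : 5 * K ≤ hubDist K t g ∧ hubDist K t g + 5 ≤ 10 * K := by
  have := ZMod.val_lt (g - t)
  unfold hubDist; omega

lemma attach_lt (t g : ZMod K) : attach K t g < 10 * K := by
  have := hubDist_bounds t g
  unfold attach; omega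

lemma hubDist_add {t g : ZMod K} {d : ℕ} (hd : d ≤ (g - t).val) :
    hubDist K (t + d) g + 5 * d = hubDist K t g := by
  have hdK : d < K := hd.trans_lt (ZMod.val_lt _)
  have : (g - (t + d)).val = (g - t).val - d := by
    rw [← sub_sub, ZMod.val_sub (by rwa [ZMod.val_cast_of_lt hdK]), ZMod.val_cast_of_lt hdK]
  unfold hubDist; omega

lemma Edge.ne {u v : Vert K} (h : Edge K u v) : u ≠ v := by
  cases h <;> simp [center, spoke, cluster]

lemma Edge.adj {u v : Vert K} (h : Edge K u v) : (graph K).Adj u v :=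
  (SimpleGraph.fromRel_adj _ _ _).mpr ⟨h.ne, Or.inl h⟩

lemma Edge.potential_le (g : ZMod K) {u v : Vert K} (h : Edge K u v) :
    potential K g u ≤ potential K g v + 1 ∧ potential K g v ≤ potential K g u + 1 := by
  cases h with
  | center_spoke t h =>
    have := hubDist_bounds t g; have := hubDist_bounds t h
    have : attach K t h = hubDist K t h - 2 := rfl
    rcases eq_or_ne h g with rfl | hne
    · simp only [potential, center, spoke, ↓reduceIte]; omega
    · simp only [potential, center, spoke, hne, ↓reduceIte]; omega
  | spoke_succ t h s =>
    simp only [potential, spoke]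
    omega
  | spoke_hub t h =>
    have := hubDist_bounds t g; have := hubDist_bounds t h
    have : attach K t h = hubDist K t h - 2 := rfl
    rcases eq_or_ne h g with rfl | hne
    · simp only [potential, spoke, cluster, ↓reduceIte]; omega
    · simp only [potential, spoke, cluster, hne, ↓reduceIte]; omega
  | hub_leaf h z =>
    simp only [potential, cluster, reduceCtorEq, if_true, if_false]
    omega

lemma potential_le_of_adj (g : ZMod K) ⦃u v : Vert K⦄ (h : (graph K).Adj u v) :
    potential K g u ≤ potential K g v + 1 := by
  rcases ((SimpleGraph.fromRel_adj _ _ _).mp h).2 with h | h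
  exacts [(h.potential_le g).1, (h.potential_le g).2]

lemma exists_walk_center_spoke (t g : ZMod K) (s : ℕ) (hs : s < 10 * K) :
    ∃ p : (graph K).Walk (center K t) (spoke K t g ⟨s, hs⟩), p.length = s + 1 := by
  induction s with
  | zero => exact ⟨.cons (Edge.center_spoke t g hs).adj .nil, rfl⟩
  | succ s ih =>
    obtain ⟨p, hp⟩ := ih (Nat.lt_of_succ_lt hs)
    exact ⟨p.concat (Edge.spoke_succ t g s hs).adj, by simp [hp]⟩

lemma exists_walk_center_hub (t g : ZMod K) :
    ∃ p : (graph K).Walk (center K t) (cluster K g none), p.length = hubDist K t g := by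
  obtain ⟨p, hp⟩ := exists_walk_center_spoke t g _ (attach_lt t g)
  refine ⟨p.concat (Edge.spoke_hub t g (attach_lt t g)).adj, ?_⟩
  have := hubDist_bounds t g
  rw [SimpleGraph.Walk.length_concat, hp, attach]
  omega

lemma connected : (graph K).Connected := by
  have hub : ∀ t g, (graph K).Reachable (center K t) (cluster K g none) := fun t g =>
    (exists_walk_center_hub t g).elim fun p _ => ⟨p⟩
  refine (SimpleGraph.connected_iff_exists_forall_reachable _).mpr ⟨center K 0, ?_⟩
  rintro (t | ⟨t, g, s⟩ | ⟨g, _ | z⟩)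
  · exact (hub 0 0).trans (hub t 0).symm
  · obtain ⟨p, _⟩ := exists_walk_center_spoke t g s s.isLt
    exact ((hub 0 0).trans (hub t 0).symm).trans ⟨p⟩
  · exact hub 0 g
  · exact (hub 0 g).trans (Edge.hub_leaf g z).adj.reachable

lemma potential_le_dist (g : ZMod K) (u : Vert K) :
    potential K g u ≤ (graph K).dist u (cluster K g none) := by
  have := (connected.preconnected u (cluster K g none)).le_add_dist (potential_le_of_adj g)
  simpa [potential, cluster] using this

lemma hubDist_le_potential {x : Vert K} {g : ZMod K} (hg : hubOf K x ≠ some g) :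
    hubDist K (base K x) g ≤ potential K g x := by
  rcases x with t | ⟨t, h, s⟩ | ⟨h, o⟩
  · exact le_rfl
  · have := hubDist_bounds t g; have := hubDist_bounds t h
    have hh : h ≠ g := by simpa [hubOf] using hg
    simp only [base, potential, attach, if_neg hh]
    omega
  · have := hubDist_bounds h g
    have hh : h ≠ g := by simpa [hubOf] using hg
    simp only [base, potential, if_neg hh]
    omega

end

def badHubs (t₀ : ℕ) (x : Vert K) : Finset (ZMod K) :=
  (Finset.range (2 * t₀)).image (fun i : ℕ => base K x + i) ∪ (hubOf K x).toFinset

open Classical in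
/-- At most `2 t₀ - 1` vertices are claimed when B moves, so one of these `2 t₀` centres is free. -/
noncomputable def reply (t₀ : ℕ) (x : Vert K) (L : List (Vert K)) : Vert K :=
  if h : ∃ d ∈ Finset.Icc 1 (2 * t₀), center K (base K x + d) ∉ L then
    center K (base K x + h.choose)
  else x

noncomputable def strategy (t₀ : ℕ) (L : List (Vert K)) : Vert K :=
  reply t₀ (L.getLastD (center K 0)) L

lemma card_badHubs_le (t₀ : ℕ) (x : Vert K) : (badHubs t₀ x).card ≤ 2 * t₀ + 1 := by
  refine (Finset.card_union_le _ _).trans (add_le_add ?_ ?_)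
  · exact Finset.card_image_le.trans (Finset.card_range _).le
  · cases hubOf K x <;> simp

lemma exists_center_notMem {m : ℕ} (hm : m < K) {L : List (Vert K)} (hL : L.length < m)
    (t : ZMod K) : ∃ d ∈ Finset.Icc 1 m, center K (t + (d : ℕ)) ∉ L := by
  by_contra! h
  have hinj : Set.InjOn (fun d : ℕ => center K (t + d)) (Finset.Icc 1 m) := by
    intro d₁ h₁ d₂ h₂ heq
    have : (d₁ : ZMod K) = d₂ := add_left_cancel (Sum.inl_injective heq)
    simp only [Finset.coe_Icc, Set.mem_Icc] at h₁ h₂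
    rwa [ZMod.natCast_eq_natCast_iff', Nat.mod_eq_of_lt (by omega),
      Nat.mod_eq_of_lt (by omega)] at this
  have := Finset.card_le_card_of_injOn _ (fun d hd => List.mem_toFinset.mpr (h d hd)) hinj
  have := L.toFinset_card_le
  simp only [Nat.card_Icc] at *
  omega

lemma reply_spec {t₀ : ℕ} (hK : 2 * t₀ < K) (x : Vert K) {L : List (Vert K)}
    (hL : L.length < 2 * t₀) :
    ∃ d ∈ Finset.Icc 1 (2 * t₀), reply t₀ x L = center K (base K x + d) ∧ reply t₀ x L ∉ L := by
  have h := exists_center_notMem hK hL (base K x)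
  rw [reply, dif_pos h]
  exact ⟨h.choose, h.choose_spec.1, rfl, h.choose_spec.2⟩

lemma bMove_strategy {t₀ : ℕ} (hK : 2 * t₀ < K) (a : ℕ → Vert K) {k : ℕ} (hk : k < t₀) :
    ∃ d ∈ Finset.Icc 1 (2 * t₀), bMove (strategy t₀) a k = center K (base K (a k) + d) ∧
      bMove (strategy t₀) a k ∉ histList (strategy t₀) a k := by
  have hL : (histList (strategy t₀) a k).length < 2 * t₀ := by rw [histList_length]; omega
  simpa only [bMove, strategy, histList_getLastD] using reply_spec hK (a k) hL

variable [NeZero K]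

lemma le_val_sub_of_notMem_badHubs {t₀ : ℕ} {x : Vert K} {g : ZMod K}
    (hg : g ∉ badHubs t₀ x) : 2 * t₀ ≤ (g - base K x).val ∧ hubOf K x ≠ some g := by
  simp only [badHubs, Finset.mem_union, Finset.mem_image, Finset.mem_range, Option.mem_toFinset,
    Option.mem_def, not_or, not_exists, not_and] at hg
  refine ⟨not_lt.mp fun h => hg.1 _ h ?_, hg.2⟩
  rw [ZMod.natCast_zmod_val, add_sub_cancel]

/-- Moving from centre `base x` to `base x + d` shortens the way to hub `g` by `5 d`, while `x`
is at least as far from hub `g` as centre `base x` by `hubDist_le_potential`. -/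
lemma dist_center_lt_dist {t₀ d : ℕ} (hd : d ∈ Finset.Icc 1 (2 * t₀)) {x : Vert K} {g : ZMod K}
    (hg : g ∉ badHubs t₀ x) (o : Option (Fin (10 * K ^ 4))) :
    (graph K).dist (center K (base K x + d)) (cluster K g o) <
      (graph K).dist x (cluster K g o) := by
  obtain ⟨hd1, hd2⟩ := Finset.mem_Icc.mp hd
  obtain ⟨hval, hhub⟩ := le_val_sub_of_notMem_badHubs hg
  have hub_lt : (graph K).dist (center K (base K x + d)) (cluster K g none) <
      (graph K).dist x (cluster K g none) := by
    obtain ⟨p, hp⟩ := exists_walk_center_hub (base K x + (d : ZMod K)) g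
    have := SimpleGraph.dist_le p
    have := hubDist_add (hd2.trans hval)
    have := hubDist_le_potential hhub
    have := potential_le_dist g x
    omega
  cases o with
  | none => exact hub_lt
  | some z =>
    have hne : x ≠ cluster K g (some z) := by rintro rfl; exact hhub rfl
    have hleaf := (connected.preconnected x _).dist_add_one_le_of_pendant hne
      fun _ => eq_hub_of_adj_leaf
    have htri := connected.dist_triangle (u := center K (base K x + d))
      (v := cluster K g none) (w := cluster K g (some z))
    rw [SimpleGraph.dist_eq_one_iff_adj.mpr (Edge.hub_leaf g z).adj] at htri
    omega

lemma le_scoreB_strategy {t₀ : ℕ} (hK : 2 * t₀ < K) (a : ℕ → Vert K) {k : ℕ} (hk : 1 ≤ k)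
    (hkt : k ≤ t₀) :
    ((K : ℝ) - (t₀ * (2 * t₀ + 1) : ℕ)) * (10 * (K : ℝ) ^ 4 + 1) ≤
      scoreB (graph K) ((Finset.range k).image a)
        ((Finset.range k).image (bMove (strategy t₀) a)) := by
  set bad := (Finset.range k).biUnion fun j => badHubs t₀ (a j)
  set won := (badᶜ ×ˢ Finset.univ).image fun p : ZMod K × Option (Fin (10 * K ^ 4)) =>
    cluster K p.1 p.2
  have hwon : ∀ v ∈ won, ∀ j < k,
      (graph K).dist (bMove (strategy t₀) a j) v < (graph K).dist (a j) v := by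
    simp only [won, bad, Finset.mem_image, Finset.mem_product, Finset.mem_compl,
      Finset.mem_biUnion, Finset.mem_range, not_exists, not_and]
    rintro _ ⟨⟨g, o⟩, ⟨hg, -⟩, rfl⟩ j hj
    obtain ⟨d, hd, hb, -⟩ := bMove_strategy hK a (hj.trans_le hkt)
    exact hb ▸ dist_center_lt_dist hd (hg j hj) o
  have hbad : bad.card ≤ t₀ * (2 * t₀ + 1) := by
    refine (Finset.card_biUnion_le_card_mul _ _ _ fun j _ => card_badHubs_le t₀ (a j)).trans ?_
    rw [Finset.card_range]
    exact Nat.mul_le_mul_right _ hkt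
  have hcard : won.card = badᶜ.card * (10 * K ^ 4 + 1) := by
    rw [Finset.card_image_of_injective _ fun p q h => by simpa [cluster, Prod.ext_iff] using h]
    simp
  have hcompl := bad.card_compl_add_card
  rw [ZMod.card] at hcompl
  calc ((K : ℝ) - (t₀ * (2 * t₀ + 1) : ℕ)) * (10 * (K : ℝ) ^ 4 + 1)
      ≤ (badᶜ.card : ℝ) * (10 * (K : ℝ) ^ 4 + 1) := by
        gcongr
        have : (bad.card : ℝ) ≤ (t₀ * (2 * t₀ + 1) : ℕ) := by exact_mod_cast hbad
        have : (badᶜ.card : ℝ) + bad.card = K := by exact_mod_cast hcompl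
        linarith
    _ = (won.card : ℝ) := by rw [hcard]; push_cast; rfl
    _ ≤ _ := card_le_scoreB_of_forall_lt a _ hk hwon

lemma card_vert : Fintype.card (Vert K) = K + K * K * (10 * K) + K * (10 * K ^ 4 + 1) := by
  simp [Vert, ZMod.card]
  ring

lemma one_sub_mul_card_vert_le {c : ℕ} {ε : ℝ} (h : (c + 1 : ℝ) ≤ ε * K) :
    (1 - ε) * Fintype.card (Vert K) ≤ (K - c) * (10 * (K : ℝ) ^ 4 + 1) := by
  have hK : (1 : ℝ) ≤ K := by exact_mod_cast Nat.one_le_iff_ne_zero.mpr (NeZero.ne K)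
  have hε : 0 ≤ ε := by nlinarith [(c.cast_nonneg : (0 : ℝ) ≤ c)]
  have hK3 : (1 : ℝ) ≤ K ^ 3 := one_le_pow₀ hK
  rw [card_vert]
  push_cast
  nlinarith [mul_nonneg (sub_nonneg.mpr hK) (sub_nonneg.mpr hK3),
    mul_nonneg hε (by positivity : (0 : ℝ) ≤ K + K * K * (10 * K)),
    mul_le_mul_of_nonneg_right h (by positivity : (0 : ℝ) ≤ 10 * K ^ 4 + 1)]

theorem isDominatingStrategy_strategy {t₀ : ℕ} {ε : ℝ} (hK : 2 * t₀ < K)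
    (hKε : (t₀ * (2 * t₀ + 1) + 1 : ℝ) ≤ ε * K) :
    IsDominatingStrategy (graph K) t₀ ε (strategy t₀) := by
  intro a _
  refine ⟨fun k hk => ?_, fun k hk hkt => ?_⟩
  · obtain ⟨d, -, -, hfresh⟩ := bMove_strategy hK a hk
    rwa [← histList_toFinset, List.mem_toFinset]
  · exact (one_sub_mul_card_vert_le (by exact_mod_cast hKε)).trans
      (le_scoreB_strategy hK a hk hkt)

end HubGraph

theorem voronoi_B_dominates_every_round_general (t₀ : ℕ) (ε : ℝ) (hε : 0 < ε) :
    ∃ (n : ℕ) (G : SimpleGraph (Fin n)), G.Connected ∧ 2 * t₀ ≤ n ∧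
      ∃ σ : List (Fin n) → Fin n,
        ∀ a : ℕ → Fin n,
          (∀ k < t₀, a k ∉ (Finset.range k).image a ∪ (Finset.range k).image (bMove σ a)) →
            (∀ k < t₀, bMove σ a k ∉
                insert (a k) ((Finset.range k).image a ∪ (Finset.range k).image (bMove σ a))) ∧
            (∀ k, 1 ≤ k → k ≤ t₀ →
              (1 - ε) * n ≤
                scoreB G ((Finset.range k).image a) ((Finset.range k).image (bMove σ a))) := by
  obtain ⟨K₀, hK₀⟩ := exists_nat_gt ((t₀ * (2 * t₀ + 1) + 1 : ℝ) / ε)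
  set K := K₀ + 2 * t₀ + 1
  have hKε : (t₀ * (2 * t₀ + 1) + 1 : ℝ) ≤ ε * K := by
    rw [div_lt_iff₀ hε] at hK₀
    have : (K₀ : ℝ) ≤ K := by exact_mod_cast (by omega : K₀ ≤ K)
    nlinarith
  have : NeZero K := ⟨by omega⟩
  let φ := SimpleGraph.Iso.map (Fintype.equivFin (HubGraph.Vert K)) (HubGraph.graph K)
  have hσ := (HubGraph.isDominatingStrategy_strategy (by omega) hKε).map φ
  rw [IsDominatingStrategy, Fintype.card_fin] at hσ
  refine ⟨_, _, φ.connected_iff.mp HubGraph.connected, ?_, _, hσ⟩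
  calc 2 * t₀ ≤ Fintype.card (ZMod K) := by rw [ZMod.card]; omega
    _ ≤ _ := Fintype.card_le_of_injective _ Sum.inl_injective

/-- For every `t₀ ≥ 1` and `ε > 0` there is a finite connected graph `G`
with `2t₀ ≤ |V(G)|` on which player B has a single strategy for the `t₀`-round Voronoi
game that always plays legally and, after each round `k = 1, …, t₀`, would score at
least `(1 − ε)·|V(G)|` if the unclaimed vertices were divided by the Voronoi rule. -/
theorem voronoi_B_dominates_every_round (t₀ : ℕ) (ht₀ : 1 ≤ t₀) (ε : ℝ) (hε : 0 < ε) :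
    ∃ (n : ℕ) (G : SimpleGraph (Fin n)), G.Connected ∧ 2 * t₀ ≤ n ∧
      ∃ σ : List (Fin n) → Fin n,
        ∀ a : ℕ → Fin n,
          (∀ k < t₀, a k ∉ (Finset.range k).image a ∪ (Finset.range k).image (bMove σ a)) →
            (∀ k < t₀, bMove σ a k ∉
                insert (a k) ((Finset.range k).image a ∪ (Finset.range k).image (bMove σ a))) ∧
            (∀ k, 1 ≤ k → k ≤ t₀ →
              (1 - ε) * n ≤
                scoreB G ((Finset.range k).image a) ((Finset.range k).image (bMove σ a))) :=
  voronoi_B_dominates_every_round_general t₀ ε hε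
end

section
/- For the path P_n on n ≥ 2 vertices, VR(P_n, 1) ≤ 1/2 + 1/(2n). -/
open SimpleGraph

variable {V : Type*}

lemma walk_exists (n k : ℕ) : ∀ (u v : Fin n), u.val + k = v.val →
    ∃ p : (pathGraph n).Walk u v, p.length = k := by
  induction k with
  | zero =>
    intro u v h
    have : u = v := Fin.ext (by omega)
    subst this
    exact ⟨SimpleGraph.Walk.nil, rfl⟩
  | succ k ih =>
    intro u v h
    have hlt : u.val + 1 < n := by have := v.isLt; omega
    set w : Fin n := ⟨u.val + 1, hlt⟩ with hw
    have hadj : (pathGraph n).Adj u w := by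
      rw [pathGraph_adj]; left; rfl
    obtain ⟨p, hp⟩ := ih w v (by simp [hw]; omega)
    exact ⟨SimpleGraph.Walk.cons hadj p, by simp [hp]⟩

lemma walk_lower {n : ℕ} {u v : Fin n} (p : (pathGraph n).Walk u v) :
    Nat.dist u.val v.val ≤ p.length := by
  induction p with
  | nil => simp [Nat.dist_self]
  | @cons a b c hadj q ih =>
    have h := hadj
    rw [pathGraph_adj] at h
    have h1 : Nat.dist a.val b.val = 1 := by
      simp [Nat.dist]; omega
    calc Nat.dist a.val c.val ≤ Nat.dist a.val b.val + Nat.dist b.val c.val :=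
          Nat.dist.triangle_inequality _ _ _
      _ ≤ 1 + q.length := by rw [h1]; omega
      _ = (SimpleGraph.Walk.cons hadj q).length := by simp [add_comm]

lemma pathGraph_dist (n : ℕ) (u v : Fin n) :
    (pathGraph n).dist u v = Nat.dist u.val v.val := by
  apply le_antisymm
  · rcases le_total u.val v.val with h | h
    · obtain ⟨p, hp⟩ := walk_exists n (v.val - u.val) u v (by omega)
      calc (pathGraph n).dist u v ≤ p.length := SimpleGraph.dist_le p
        _ = Nat.dist u.val v.val := by rw [hp, Nat.dist_eq_sub_of_le h]
    · obtain ⟨p, hp⟩ := walk_exists n (u.val - v.val) v u (by omega)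
      calc (pathGraph n).dist u v ≤ p.reverse.length := SimpleGraph.dist_le p.reverse
        _ = Nat.dist u.val v.val := by
            rw [SimpleGraph.Walk.length_reverse, hp, Nat.dist_eq_sub_of_le_right h]
  · by_cases h0 : (pathGraph n).dist u v = 0
    · rw [h0]
      have : u = v := by
        have hr : (pathGraph n).Reachable u v := (pathGraph_preconnected n) u v
        exact (hr.dist_eq_zero_iff).mp h0
      simp [this, Nat.dist_self]
    · obtain ⟨p, hp⟩ := SimpleGraph.exists_walk_of_dist_ne_zero h0
      rw [← hp]; exact walk_lower p

lemma scoreA_nonneg [Fintype V] (G : SimpleGraph V) (A B : Finset V) :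
    0 ≤ scoreA G A B := by
  apply Finset.sum_nonneg
  intro v _
  split_ifs <;> norm_num

lemma scoreA_le_filter (n : ℕ) (a b : Fin n) :
    scoreA (pathGraph n) {a} {b} ≤
      ((Finset.univ.filter fun v : Fin n =>
        Nat.dist a.val v.val ≤ Nat.dist b.val v.val).card : ℝ) := by
  rw [scoreA, ← Finset.sum_boole]
  apply Finset.sum_le_sum
  intro v _
  simp only [distToSet, Finset.inf_singleton, pathGraph_dist, Nat.cast_lt, Nat.cast_inj]
  split_ifs <;>
    first
      | (exact absurd (le_of_lt ‹_›) ‹_›)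
      | (exact absurd (le_of_eq ‹_›) ‹_›)
      | norm_num

/-- For the path `P_n` on `n ≥ 2` vertices, `VR(P_n, 1) ≤ 1/2 + 1/(2n)`. -/
theorem vr_path_one_round (n : ℕ) (hn : 2 ≤ n) :
    VR (SimpleGraph.pathGraph n) 1 ≤ 1 / 2 + 1 / (2 * n) := by
  have hn0 : (0:ℝ) < n := by exact_mod_cast Nat.lt_of_lt_of_le Nat.zero_lt_two hn
  have key : gameValue (pathGraph n) 1 (∅ : Finset (Fin n)) ∅ ≤ ((n : ℝ) + 1) / 2 := by
    rw [gameValue]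
    apply Real.sSup_le
    · rintro r ⟨a, -, -, rfl⟩
      have hbdd : BddBelow {s : ℝ | ∃ b, b ∉ insert a (∅ : Finset (Fin n)) ∧
          b ∉ (∅ : Finset (Fin n)) ∧
          s = gameValue (pathGraph n) 0 (insert a ∅) (insert b ∅)} := by
        refine ⟨0, ?_⟩
        rintro s ⟨b, -, -, rfl⟩
        rw [gameValue]
        exact scoreA_nonneg _ _ _
      by_cases hc : 2 * a.val + 1 ≤ n
      · have hblt : a.val + 1 < n := by omega
        set b : Fin n := ⟨a.val + 1, hblt⟩ with hb
        have hbne : b ∉ insert a (∅ : Finset (Fin n)) := by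
          simp only [Finset.mem_insert, Finset.notMem_empty, or_false]
          intro h
          have := congrArg Fin.val h
          simp [hb] at this
        refine csInf_le_of_le hbdd ⟨b, hbne, by simp, rfl⟩ ?_
        rw [gameValue]
        have hfil : (Finset.univ.filter fun v : Fin n =>
            Nat.dist a.val v.val ≤ Nat.dist b.val v.val) = Finset.Iic a := by
          ext v
          simp only [Finset.mem_filter, Finset.mem_univ, true_and, Finset.mem_Iic,
            Fin.le_def, Nat.dist, hb]
          omega
        have h2 : ((a.val + 1 : ℕ) : ℝ) ≤ ((n : ℝ) + 1) / 2 := by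
          rw [le_div_iff₀ (by norm_num : (0:ℝ) < 2)]
          have : (2 * a.val + 1 : ℝ) ≤ n := by exact_mod_cast hc
          push_cast
          linarith
        calc gameValue (pathGraph n) 0 (insert a ∅) (insert b ∅)
            = scoreA (pathGraph n) {a} {b} := by simp [gameValue]
          _ ≤ ((Finset.univ.filter fun v : Fin n =>
                Nat.dist a.val v.val ≤ Nat.dist b.val v.val).card : ℝ) :=
              scoreA_le_filter n a b
          _ = ((a.val + 1 : ℕ) : ℝ) := by rw [hfil, Fin.card_Iic]
          _ ≤ ((n : ℝ) + 1) / 2 := h2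
      · have ha1 : 1 ≤ a.val := by have := a.isLt; omega
        have hblt : a.val - 1 < n := by have := a.isLt; omega
        set b : Fin n := ⟨a.val - 1, hblt⟩ with hb
        have hbne : b ∉ insert a (∅ : Finset (Fin n)) := by
          simp only [Finset.mem_insert, Finset.notMem_empty, or_false]
          intro h
          have := congrArg Fin.val h
          simp [hb] at this
          omega
        refine csInf_le_of_le hbdd ⟨b, hbne, by simp, rfl⟩ ?_
        rw [gameValue]
        have hfil : (Finset.univ.filter fun v : Fin n =>
            Nat.dist a.val v.val ≤ Nat.dist b.val v.val) = Finset.Ici a := by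
          ext v
          simp only [Finset.mem_filter, Finset.mem_univ, true_and, Finset.mem_Ici,
            Fin.le_def, Nat.dist, hb]
          omega
        have h2 : ((n - a.val : ℕ) : ℝ) ≤ ((n : ℝ) + 1) / 2 := by
          rw [le_div_iff₀ (by norm_num : (0:ℝ) < 2)]
          have hna : (n : ℝ) ≤ 2 * a.val := by exact_mod_cast (by omega : n ≤ 2 * a.val)
          rw [Nat.cast_sub (le_of_lt a.isLt)]
          linarith
        calc gameValue (pathGraph n) 0 (insert a ∅) (insert b ∅)
            = scoreA (pathGraph n) {a} {b} := by simp [gameValue]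
          _ ≤ ((Finset.univ.filter fun v : Fin n =>
                Nat.dist a.val v.val ≤ Nat.dist b.val v.val).card : ℝ) :=
              scoreA_le_filter n a b
          _ = ((n - a.val : ℕ) : ℝ) := by rw [hfil, Fin.card_Ici]
          _ ≤ ((n : ℝ) + 1) / 2 := h2
    · positivity
  have hVR : VR (SimpleGraph.pathGraph n) 1 = gameValue (pathGraph n) 1 (∅ : Finset (Fin n)) ∅ / n := by
    simp [VR]
  rw [hVR]
  have h3 : ((n : ℝ) + 1) / 2 / n = 1 / 2 + 1 / (2 * n) := by
    field_simp
    try ring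
  calc gameValue (pathGraph n) 1 (∅ : Finset (Fin n)) ∅ / n
      ≤ (((n : ℝ) + 1) / 2) / n := by gcongr
    _ = 1 / 2 + 1 / (2 * n) := h3
end
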